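/- Let φ: ℝ^J → ℝ be a convex function, x ∈ ℝ^J, and g ∈ ℝ^J such that for every index j with g_j ≠ 0, the partial derivative ∂φ/∂x_j exists at x and equals g_j. Define d = 0 if ‖g‖ = 0 and d = -g/‖g‖ otherwise. Then d is a nonascending vector for φ at x; that is, ‖d‖ ≤ 1 and there exists δ > 0 such that φ(x + λd) ≤ φ(x) for all λ ∈ [0, δ]. -/

import Mathlib

open Finset RealInnerProductSpace

theorem stmt_1 {J : ℕ} (φ : EuclideanSpace ℝ (Fin J) → ℝ)
    (hφ : ConvexOn ℝ Set.univ φ)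
    (x g : EuclideanSpace ℝ (Fin J))
    (hg : ∀ j : Fin J, g j ≠ 0 →
      HasDerivAt (fun t : ℝ => φ (x + t • EuclideanSpace.single j (1:ℝ))) (g j) 0)
    (d : EuclideanSpace ℝ (Fin J))
    (hd : d = if ‖g‖ = 0 then 0 else -(‖g‖⁻¹ • g)) :
    ‖d‖ ≤ 1 ∧ ∃ δ > 0, ∀ l ∈ Set.Icc (0:ℝ) δ, φ (x + l • d) ≤ φ x := by
  subst hd
  by_cases hg0 : ‖g‖ = 0
  · rw [if_pos hg0]
    exact ⟨by simp, 1, one_pos, fun l hl => by simp⟩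
  · rw [if_neg hg0]
    have hgpos : 0 < ‖g‖ := lt_of_le_of_ne (norm_nonneg g) (Ne.symm hg0)
    have hgne : g ≠ 0 := norm_ne_zero_iff.mp hg0
    have hJ : 0 < J := by
      rcases Nat.eq_zero_or_pos J with h | h
      · subst h
        exact absurd (PiLp.ext fun i => Fin.elim0 i) hgne
      · exact h
    haveI : Nonempty (Fin J) := Fin.pos_iff_nonempty.mp hJ
    have hJR : (0:ℝ) < (J:ℝ) := by exact_mod_cast hJ
    refine ⟨?_, ?_⟩
    · rw [norm_neg, norm_smul, norm_inv, norm_norm, inv_mul_cancel₀ hg0]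
    set c : Fin J → ℝ := fun j => -(‖g‖⁻¹ * g j) with hcdef
    have hdc : ∀ j : Fin J, (-(‖g‖⁻¹ • g)) j = c j := fun j => rfl
    have hc1 : ∀ j, |c j| ≤ 1 := by
      intro j
      have h1 : |g j| ≤ ‖g‖ := by
        calc |g j| = |(inner ℝ (EuclideanSpace.single j (1:ℝ)) g : ℝ)| := by
              simp [EuclideanSpace.inner_single_left]
          _ ≤ ‖EuclideanSpace.single j (1:ℝ)‖ * ‖g‖ := abs_real_inner_le_norm _ _
          _ = ‖g‖ := by simp [EuclideanSpace.norm_single]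
      have : |c j| = ‖g‖⁻¹ * |g j| := by
        rw [hcdef]; simp [abs_mul, abs_of_nonneg (inv_nonneg.mpr hgpos.le)]
      rw [this]
      calc ‖g‖⁻¹ * |g j| ≤ ‖g‖⁻¹ * ‖g‖ := by
            exact mul_le_mul_of_nonneg_left h1 (inv_nonneg.mpr hgpos.le)
        _ = 1 := inv_mul_cancel₀ hg0
    set ε : ℝ := ‖g‖ / (2 * J) with hεdef
    have hεpos : 0 < ε := by positivity
    -- key per-coordinate estimate
    have hkey : ∀ j : Fin J, ∃ δj > 0, ∀ t : ℝ, 0 ≤ t → t ≤ δj →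
        φ (x + ((J : ℝ) * t * c j) • EuclideanSpace.single j (1:ℝ)) ≤
          φ x + ((J:ℝ)*t) * (c j * g j) + ε * ((J:ℝ)*t) := by
      intro j
      by_cases hj : g j = 0
      · refine ⟨1, one_pos, fun t ht ht1 => ?_⟩
        have hcj : c j = 0 := by simp [hcdef, hj]
        rw [hcj]
        simp only [mul_zero, zero_smul, add_zero, zero_mul]
        nlinarith [mul_nonneg hεpos.le (mul_nonneg hJR.le ht)]
      · have hder := hg j hj
        have hlo := Asymptotics.isLittleO_iff.mp (hasDerivAt_iff_isLittleO.mp hder) hεpos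
        rw [Metric.eventually_nhds_iff] at hlo
        obtain ⟨δ0, hδ0pos, hδ0⟩ := hlo
        refine ⟨δ0 / (2 * J), by positivity, fun t ht ht1 => ?_⟩
        set s : ℝ := (J:ℝ) * t * c j with hsdef
        have habs : |s| ≤ (J:ℝ) * t := by
          rw [hsdef, abs_mul]
          calc |(J:ℝ)*t| * |c j| ≤ |(J:ℝ)*t| * 1 :=
                mul_le_mul_of_nonneg_left (hc1 j) (abs_nonneg _)
            _ = (J:ℝ)*t := by rw [mul_one, abs_of_nonneg (by positivity)]
        have hslt : dist s 0 < δ0 := by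
          rw [Real.dist_eq, sub_zero]
          calc |s| ≤ (J:ℝ)*t := habs
            _ ≤ (J:ℝ) * (δ0 / (2*J)) := mul_le_mul_of_nonneg_left ht1 hJR.le
            _ = δ0 / 2 := by field_simp
            _ < δ0 := by linarith
        have hb := hδ0 hslt
        simp only [sub_zero, smul_eq_mul, Real.norm_eq_abs] at hb
        -- hb : |φ (x + s • e_j) - φ (x + 0 • e_j) - s * g j| ≤ ε * |s|
        have hb0 : φ (x + s • EuclideanSpace.single j (1:ℝ)) ≤
            φ (x + (0:ℝ) • EuclideanSpace.single j (1:ℝ)) + s * g j + ε * |s| := by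
          have := abs_le.mp hb
          linarith [this.2]
        simp only [zero_smul, add_zero] at hb0
        calc φ (x + s • EuclideanSpace.single j (1:ℝ)) ≤ φ x + s * g j + ε * |s| := hb0
          _ ≤ φ x + ((J:ℝ)*t) * (c j * g j) + ε * ((J:ℝ)*t) := by
              have : s * g j = ((J:ℝ)*t) * (c j * g j) := by rw [hsdef]; ring
              rw [this]
              have := mul_le_mul_of_nonneg_left habs hεpos.le
              linarith
    choose Δ hΔpos hΔ using hkey
    set δ : ℝ := Finset.univ.inf' Finset.univ_nonempty Δ with hδdef
    have hδpos : 0 < δ := by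
      rw [hδdef, Finset.lt_inf'_iff]
      exact fun j _ => hΔpos j
    refine ⟨δ, hδpos, fun t ht => ?_⟩
    obtain ⟨ht0, htδ⟩ := ht
    have happ : ∀ (f : Fin J → EuclideanSpace ℝ (Fin J)) (k : Fin J),
        (∑ j, f j) k = ∑ j, f j k := by
      intro f k
      have h := map_sum (EuclideanSpace.proj (𝕜 := ℝ) k) f Finset.univ
      simp only [PiLp.proj_apply] at h
      exact h
    have hrepr : x + t • (-(‖g‖⁻¹ • g)) =
        ∑ j : Fin J, ((J:ℝ)⁻¹) • (x + ((J:ℝ) * t * c j) • EuclideanSpace.single j (1:ℝ)) := by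
      refine PiLp.ext fun k => ?_
      rw [happ]
      simp only [PiLp.add_apply, PiLp.smul_apply, PiLp.neg_apply, smul_eq_mul,
        EuclideanSpace.single_apply, mul_add, Finset.sum_add_distrib, Finset.sum_const,
        Finset.card_univ, Fintype.card_fin, nsmul_eq_mul, mul_ite, mul_one, mul_zero,
        Finset.sum_ite_eq', Finset.sum_ite_eq, Finset.mem_univ, if_true]
      field_simp [hg0]
      linear_combination (t * g k) * mul_inv_cancel₀ hg0
    have hsum1 : ∑ _j : Fin J, ((J:ℝ)⁻¹) = 1 := by
      rw [Finset.sum_const, Finset.card_univ, Fintype.card_fin, nsmul_eq_mul,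
        mul_inv_cancel₀ (ne_of_gt hJR)]
    have hJen := hφ.map_sum_le (t := Finset.univ) (w := fun _ => (J:ℝ)⁻¹)
      (p := fun j => x + ((J:ℝ) * t * c j) • EuclideanSpace.single j (1:ℝ))
      (fun i _ => by positivity) hsum1 (fun i _ => Set.mem_univ _)
    rw [← hrepr] at hJen
    simp only [smul_eq_mul] at hJen
    have hbound : ∑ j : Fin J, ((J:ℝ)⁻¹) *
        φ (x + ((J:ℝ) * t * c j) • EuclideanSpace.single j (1:ℝ)) ≤
        ∑ j : Fin J, ((J:ℝ)⁻¹) * (φ x + ((J:ℝ)*t) * (c j * g j) + ε * ((J:ℝ)*t)) := by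
      apply Finset.sum_le_sum
      intro j _
      apply mul_le_mul_of_nonneg_left _ (by positivity)
      exact hΔ j t ht0 (le_trans htδ (Finset.inf'_le Δ (Finset.mem_univ j)))
    have hinner : ∑ j : Fin J, g j * g j = ‖g‖ ^ 2 := by
      rw [← real_inner_self_eq_norm_sq]
      simp only [PiLp.inner_apply, RCLike.inner_apply, conj_trivial]
    have hcg : ∑ j : Fin J, c j * g j = -‖g‖ := by
      calc ∑ j : Fin J, c j * g j = -(‖g‖⁻¹ * ∑ j : Fin J, g j * g j) := by
            rw [Finset.mul_sum, ← Finset.sum_neg_distrib]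
            exact Finset.sum_congr rfl fun j _ => by simp only [hcdef]; ring
        _ = -‖g‖ := by rw [hinner]; field_simp
    have hfinal : ∑ j : Fin J, ((J:ℝ)⁻¹) * (φ x + ((J:ℝ)*t) * (c j * g j) + ε * ((J:ℝ)*t)) =
        φ x + t * (-‖g‖) + ε * ((J:ℝ)*t) := by
      have h1 : ∀ j : Fin J, ((J:ℝ)⁻¹) * (φ x + ((J:ℝ)*t) * (c j * g j) + ε * ((J:ℝ)*t)) =
          ((J:ℝ)⁻¹) * (φ x + ε * ((J:ℝ)*t)) + t * (c j * g j) := by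
        intro j; field_simp; ring
      rw [Finset.sum_congr rfl fun j _ => h1 j, Finset.sum_add_distrib, Finset.sum_const,
        Finset.card_univ, Fintype.card_fin, nsmul_eq_mul, ← Finset.mul_sum, hcg]
      field_simp
      ring
    have hεJt : ε * ((J:ℝ)*t) = ‖g‖ * t / 2 := by
      rw [hεdef]; field_simp
    calc φ (x + t • (-(‖g‖⁻¹ • g))) ≤
          ∑ j : Fin J, ((J:ℝ)⁻¹) * φ (x + ((J:ℝ) * t * c j) • EuclideanSpace.single j (1:ℝ)) :=
          hJen
      _ ≤ ∑ j : Fin J, ((J:ℝ)⁻¹) * (φ x + ((J:ℝ)*t) * (c j * g j) + ε * ((J:ℝ)*t)) := hbound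
      _ = φ x + t * (-‖g‖) + ε * ((J:ℝ)*t) := hfinal
      _ ≤ φ x := by rw [hεJt]; nlinarith [hgpos, ht0]
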